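/- Let H be an undirected graph on n vertices and let G_sub be obtained from H by subdividing each edge at most once. Then for every acyclic orientation of G_sub, the DAG treewidth of the resulting DAG is at most ⌈n/2⌉. -/

import Mathlib

open Set

namespace DagPaper

variable {V : Type*}

/-- Adjacency of a digraph restricted to a vertex set `A`. -/
def restrAdj (Adj : V → V → Prop) (A : Set V) : V → V → Prop :=
  fun u v => u ∈ A ∧ v ∈ A ∧ Adj u v

/-- Underlying undirected (symmetrized) adjacency restricted to `A`. -/
def symAdj (Adj : V → V → Prop) (A : Set V) : V → V → Prop :=
  fun u v => restrAdj Adj A u v ∨ restrAdj Adj A v u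

/-- `v` is a source (indegree zero) of the sub-DAG induced on `A`. -/
def IsSource (Adj : V → V → Prop) (A : Set V) (v : V) : Prop :=
  v ∈ A ∧ ∀ u ∈ A, ¬ Adj u v

/-- Vertices reachable from `s` by directed paths inside `A` (including `s`). -/
def Reach (Adj : V → V → Prop) (A : Set V) (s : V) : Set V :=
  {v | Relation.ReflTransGen (restrAdj Adj A) s v}

/-- Vertices reachable from a set of vertices `S` inside `A`. -/
def ReachSet (Adj : V → V → Prop) (A : Set V) (S : Set V) : Set V :=
  ⋃ s ∈ S, Reach Adj A s

/-- Connected component of `v` in the underlying undirected graph induced on `A`. -/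
def Comp (Adj : V → V → Prop) (A : Set V) (v : V) : Set V :=
  {u | Relation.ReflTransGen (symAdj Adj A) v u}

/-- The digraph `Adj` is acyclic. -/
def Acyclic (Adj : V → V → Prop) : Prop := ∀ v, ¬ Relation.TransGen Adj v v

/-- `dtdLE Adj A n`: the sub-DAG induced on `A` admits a DAG elimination forest of
depth at most `n`: each connected component is emptied by repeatedly choosing a
source `s` and deleting `s` together with all vertices reachable from it. -/
inductive dtdLE (Adj : V → V → Prop) : Set V → ℕ → Prop where
  | empty (n : ℕ) : dtdLE Adj ∅ n
  | step (A : Set V) (n : ℕ) (s : V → V)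
      (hs : ∀ v ∈ A, IsSource Adj (Comp Adj A v) (s v))
      (h : ∀ v ∈ A, dtdLE Adj (Comp Adj A v \ Reach Adj (Comp Adj A v) (s v)) n) :
      dtdLE Adj A (n + 1)

/-- DAG treedepth of a DAG: minimum depth of a DAG elimination forest. -/
noncomputable def dtd (Adj : V → V → Prop) : ℕ := sInf {n | dtdLE Adj Set.univ n}

/-- `IsEF Adj A anc n`: there is a DAG elimination forest for the sub-DAG on `A`,
of depth at most `n`, whose ancestor relation is contained in `anc`: whenever a
source `s` is chosen as a root of a component, `anc s u` holds for every vertex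
`u` remaining below it. -/
inductive IsEF (Adj : V → V → Prop) : Set V → (V → V → Prop) → ℕ → Prop where
  | empty (anc : V → V → Prop) (n : ℕ) : IsEF Adj ∅ anc n
  | step (A : Set V) (anc : V → V → Prop) (n : ℕ) (s : V → V)
      (hs : ∀ v ∈ A, IsSource Adj (Comp Adj A v) (s v))
      (hanc : ∀ v ∈ A, ∀ u ∈ Comp Adj A v \ Reach Adj (Comp Adj A v) (s v), anc (s v) u)
      (h : ∀ v ∈ A, IsEF Adj (Comp Adj A v \ Reach Adj (Comp Adj A v) (s v)) anc n) :
      IsEF Adj A anc (n + 1)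

/-- `Adj` is an acyclic orientation of the undirected simple graph `G`. -/
structure IsAcyclicOrientation (G : SimpleGraph V) (Adj : V → V → Prop) : Prop where
  subset : ∀ u v, Adj u v → G.Adj u v
  covers : ∀ u v, G.Adj u v → Adj u v ∨ Adj v u
  antisymm : ∀ u v, Adj u v → ¬ Adj v u
  acyclic : Acyclic Adj

/-- `tdLE G A n`: the subgraph of `G` induced on `A` admits an elimination forest of
depth at most `n` (classical treedepth). -/
inductive tdLE (G : SimpleGraph V) : Set V → ℕ → Prop where
  | empty (n : ℕ) : tdLE G ∅ n
  | step (A : Set V) (n : ℕ) (r : V → V)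
      (hr : ∀ v ∈ A, r v ∈ Comp G.Adj A v)
      (h : ∀ v ∈ A, tdLE G (Comp G.Adj A v \ {r v}) n) :
      tdLE G A (n + 1)

/-- Treedepth of an undirected graph. -/
noncomputable def td (G : SimpleGraph V) : ℕ := sInf {n | tdLE G Set.univ n}

/-- `I` is a minor of `H`, via branch sets. -/
def IsMinor {W : Type*} (I : SimpleGraph W) (H : SimpleGraph V) : Prop :=
  ∃ B : W → Set V, (∀ a, (B a).Nonempty) ∧
    (∀ a, ∀ x ∈ B a, ∀ y ∈ B a,
      Relation.ReflTransGen (fun p q => p ∈ B a ∧ q ∈ B a ∧ H.Adj p q) x y) ∧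
    (∀ a b, a ≠ b → Disjoint (B a) (B b)) ∧
    (∀ a b, I.Adj a b → ∃ x ∈ B a, ∃ y ∈ B b, H.Adj x y)

/-- `I` is an induced minor of `H` (vertex deletions and edge contractions),
via branch sets. -/
def IsInducedMinor {W : Type*} (I : SimpleGraph W) (H : SimpleGraph V) : Prop :=
  ∃ B : W → Set V, (∀ a, (B a).Nonempty) ∧
    (∀ a, ∀ x ∈ B a, ∀ y ∈ B a,
      Relation.ReflTransGen (fun p q => p ∈ B a ∧ q ∈ B a ∧ H.Adj p q) x y) ∧
    (∀ a b, a ≠ b → Disjoint (B a) (B b)) ∧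
    (∀ a b, a ≠ b → (I.Adj a b ↔ ∃ x ∈ B a, ∃ y ∈ B b, H.Adj x y))

/-- `G'` is obtained from `G` by contracting the single edge `{u, v}`, with
quotient map `f`. -/
def IsEdgeContraction {W : Type*} (G : SimpleGraph V) (G' : SimpleGraph W)
    (f : V → W) (u v : V) : Prop :=
  G.Adj u v ∧ f u = f v ∧ Function.Surjective f ∧
  (∀ x y, f x = f y → x ≠ y → (x = u ∧ y = v) ∨ (x = v ∧ y = u)) ∧
  (∀ a b, G'.Adj a b ↔ a ≠ b ∧ ∃ x y, f x = a ∧ f y = b ∧ G.Adj x y)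

/-- `k` lies on the (unique, in a tree) path between `i` and `j`:
every walk from `i` to `j` passes through `k`. -/
def OnPath {ι : Type*} (T : SimpleGraph ι) (i k j : ι) : Prop :=
  ∀ p : T.Walk i j, k ∈ p.support

/-- A DAG tree decomposition of the DAG `Adj` (Bressan). -/
structure DagTreeDecomp (Adj : V → V → Prop) (ι : Type*) where
  tree : SimpleGraph ι
  conn : tree.Connected
  acyc : tree.IsAcyclic
  bags : ι → Set V
  bags_sources : ∀ i, ∀ v ∈ bags i, IsSource Adj Set.univ v
  cover : ∀ v, IsSource Adj Set.univ v → ∃ i, v ∈ bags i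
  reach : ∀ i k j, OnPath tree i k j →
    ReachSet Adj Set.univ (bags i) ∩ ReachSet Adj Set.univ (bags j)
      ⊆ ReachSet Adj Set.univ (bags k)

/-- The DAG has a DAG tree decomposition of width (max bag size) at most `w`. -/
def dtwLE (Adj : V → V → Prop) (w : ℕ) : Prop :=
  ∃ (ι : Type) (D : DagTreeDecomp Adj ι), ∀ i, (D.bags i).ncard ≤ w

/-- DAG treewidth of a DAG. -/
noncomputable def dtw (Adj : V → V → Prop) : ℕ := sInf {w | dtwLE Adj w}

/-- A tree decomposition of an undirected graph. -/
structure TreeDecomp (G : SimpleGraph V) (ι : Type*) where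
  tree : SimpleGraph ι
  conn : tree.Connected
  acyc : tree.IsAcyclic
  bags : ι → Set V
  vcover : ∀ v, ∃ i, v ∈ bags i
  ecover : ∀ u v, G.Adj u v → ∃ i, u ∈ bags i ∧ v ∈ bags i
  vconn : ∀ v i k j, v ∈ bags i → v ∈ bags j → OnPath tree i k j → v ∈ bags k

/-- `G` has a tree decomposition of width at most `w` (bags of size ≤ w + 1). -/
def twLE (G : SimpleGraph V) (w : ℕ) : Prop :=
  ∃ (ι : Type) (D : TreeDecomp G ι), ∀ i, (D.bags i).ncard ≤ w + 1

/-- Treewidth of an undirected graph. -/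
noncomputable def tw (G : SimpleGraph V) : ℕ := sInf {w | twLE G w}

/-- A generalized hypertree decomposition of the hypergraph with hyperedge set `E`. -/
structure GHD {Vh : Type*} (E : Set (Set Vh)) (ι : Type*) where
  tree : SimpleGraph ι
  conn : tree.Connected
  acyc : tree.IsAcyclic
  vbags : ι → Set Vh
  ecov : ι → Set (Set Vh)
  ecov_mem : ∀ i, ecov i ⊆ E
  edge_cover : ∀ e ∈ E, ∃ i, e ⊆ vbags i
  vconn : ∀ v i k j, v ∈ vbags i → v ∈ vbags j → OnPath tree i k j → v ∈ vbags k
  guard : ∀ i, vbags i ⊆ ⋃ e ∈ ecov i, e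

/-- The hypergraph has a generalized hypertree decomposition of width at most `w`. -/
def ghwLE {Vh : Type*} (E : Set (Set Vh)) (w : ℕ) : Prop :=
  ∃ (ι : Type) (D : GHD E ι), ∀ i, (D.ecov i).ncard ≤ w

/-- Generalized hypertree width. -/
noncomputable def ghw {Vh : Type*} (E : Set (Set Vh)) : ℕ := sInf {w | ghwLE E w}

/-- The graph obtained from `G` by subdividing exactly the edges in `E'` once. -/
def subdivGraph {V : Type} (G : SimpleGraph V) (E' : Set G.edgeSet) :
    SimpleGraph (V ⊕ ↥E') :=
  SimpleGraph.fromRel (fun x y =>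
    (∃ a b : V, x = Sum.inl a ∧ y = Sum.inl b ∧ G.Adj a b ∧
        ∀ e : E', ((e : G.edgeSet) : Sym2 V) ≠ s(a, b)) ∨
    (∃ (a : V) (e : E'), x = Sum.inl a ∧ y = Sum.inr e ∧ a ∈ ((e : G.edgeSet) : Sym2 V)))

section Generic
variable {α : Type*} {A : α → α → Prop}

lemma restrAdj_univ {u v : α} : restrAdj A Set.univ u v ↔ A u v :=
  ⟨fun h => h.2.2, fun h => ⟨trivial, trivial, h⟩⟩

lemma reach_refl (s : α) : s ∈ Reach A Set.univ s := Relation.ReflTransGen.refl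

lemma reach_trans {x y z : α} (h1 : y ∈ Reach A Set.univ x) (h2 : z ∈ Reach A Set.univ y) :
    z ∈ Reach A Set.univ x := Relation.ReflTransGen.trans h1 h2

lemma reach_single {u v : α} (h : A u v) : v ∈ Reach A Set.univ u :=
  Relation.ReflTransGen.single (restrAdj_univ.mpr h)

lemma reach_tail {u v w : α} (h1 : v ∈ Reach A Set.univ u) (h2 : A v w) :
    w ∈ Reach A Set.univ u := Relation.ReflTransGen.tail h1 (restrAdj_univ.mpr h2)

lemma source_reach_eq {v t : α} (hv : IsSource A Set.univ v) (ht : v ∈ Reach A Set.univ t) :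
    t = v := by
  rcases Relation.ReflTransGen.cases_tail ht with rfl | ⟨c, _, hcv⟩
  · rfl
  · exact absurd hcv.2.2 (hv.2 c trivial)

end Generic

section Subdiv

variable {V : Type} [Fintype V] {G : SimpleGraph V} {E' : Set G.edgeSet}
  {Adj : (V ⊕ ↥E') → (V ⊕ ↥E') → Prop}

/-- endpoints of a subdivided edge -/
def EndS (G : SimpleGraph V) (E' : Set G.edgeSet) (e : ↥E') : Set V :=
  {v | v ∈ ((e : G.edgeSet) : Sym2 V)}

lemma endS_pair (e : ↥E') : ∃ a b : V, a ≠ b ∧ EndS G E' e = {a, b} := by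
  obtain ⟨⟨a, b⟩, hab⟩ := Quot.exists_rep ((e : G.edgeSet) : Sym2 V)
  refine ⟨a, b, ?_, ?_⟩
  · intro hab'
    subst hab'
    have := G.not_isDiag_of_mem_edgeSet (e : G.edgeSet).2
    rw [← hab] at this
    exact this rfl
  · ext v
    simp only [EndS, mem_setOf_eq, ← hab, mem_insert_iff, mem_singleton_iff]
    exact Sym2.mem_iff

lemma adj_inl_inr {y : V} {e : ↥E'} (hy : y ∈ EndS G E' e) :
    (subdivGraph G E').Adj (Sum.inl y) (Sum.inr e) := by
  rw [subdivGraph, SimpleGraph.fromRel_adj]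
  exact ⟨by simp, Or.inl (Or.inr ⟨y, e, rfl, rfl, hy⟩)⟩

lemma adj_to_inr {z : V ⊕ ↥E'} {e : ↥E'} (hz : (subdivGraph G E').Adj z (Sum.inr e)) :
    ∃ y : V, z = Sum.inl y ∧ y ∈ EndS G E' e := by
  rw [subdivGraph, SimpleGraph.fromRel_adj] at hz
  rcases hz.2 with (⟨a, b, _, hb, _⟩ | ⟨a, f, ha, hf, hmem⟩) | (⟨a, b, ha, _, _⟩ | ⟨a, f, ha, _, _⟩)
  · exact absurd hb.symm Sum.inl_ne_inr
  · obtain rfl := Sum.inr_injective hf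
    exact ⟨a, ha, hmem⟩
  · exact absurd ha Sum.inr_ne_inl
  · exact absurd ha Sum.inr_ne_inl

variable (hor : IsAcyclicOrientation (subdivGraph G E') Adj)
include hor

lemma dadj_to_inr {z : V ⊕ ↥E'} {e : ↥E'} (hz : Adj z (Sum.inr e)) :
    ∃ y : V, z = Sum.inl y ∧ y ∈ EndS G E' e :=
  adj_to_inr (hor.subset _ _ hz)

lemma dadj_from_inr {z : V ⊕ ↥E'} {e : ↥E'} (hz : Adj (Sum.inr e) z) :
    ∃ y : V, z = Sum.inl y ∧ y ∈ EndS G E' e :=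
  adj_to_inr ((hor.subset _ _ hz).symm)

lemma edgeSource_reaches {e : ↥E'} (he : IsSource Adj Set.univ (Sum.inr e)) {y : V}
    (hy : y ∈ EndS G E' e) : Sum.inl y ∈ Reach Adj Set.univ (Sum.inr e) := by
  rcases hor.covers _ _ (adj_inl_inr hy) with hc | hc
  · exact absurd hc (he.2 _ trivial)
  · exact reach_single hc

lemma endpoint_not_vsource {e : ↥E'} (he : IsSource Adj Set.univ (Sum.inr e)) {y : V}
    (hy : y ∈ EndS G E' e) : ¬ IsSource Adj Set.univ (Sum.inl y) := by
  intro hv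
  rcases hor.covers _ _ (adj_inl_inr hy) with hc | hc
  · exact he.2 _ trivial hc
  · exact hv.2 _ trivial hc

/-- structure of reachability: anything reached (other than the start) is an original
vertex in the reach set, or one arc past such an original vertex. -/
lemma reach_structure {s x : V ⊕ ↥E'} (hx : x ∈ Reach Adj Set.univ s) :
    x = s ∨ ∃ u : V, Sum.inl u ∈ Reach Adj Set.univ s ∧
      (x = Sum.inl u ∨ Adj (Sum.inl u) x) := by
  induction hx with
  | refl => exact Or.inl rfl
  | tail p step ih =>
    rename_i b c
    have hbc : Adj b c := step.2.2
    have hb : b ∈ Reach Adj Set.univ s := p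
    rcases b with u | f
    · exact Or.inr ⟨u, hb, Or.inr hbc⟩
    · obtain ⟨y, rfl, _⟩ := dadj_from_inr hor hbc
      exact Or.inr ⟨y, reach_tail hb hbc, Or.inl rfl⟩

lemma reach_from_edgeSource {e : ↥E'} {u : V}
    (hu : Sum.inl u ∈ Reach Adj Set.univ (Sum.inr e)) :
    ∃ y ∈ EndS G E' e, Sum.inl u ∈ Reach Adj Set.univ (Sum.inl y) := by
  rcases Relation.ReflTransGen.cases_head hu with heq | ⟨c, hstep, hrest⟩
  · exact absurd heq (by simp)
  · obtain ⟨y, rfl, hy⟩ := dadj_from_inr hor hstep.2.2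
    exact ⟨y, hy, hrest⟩

end Subdiv

section Star
variable {σ : Type*} (anchor : σ → Bool)

def starTree : SimpleGraph (Bool ⊕ σ) :=
  SimpleGraph.fromRel (fun x y =>
    (x = Sum.inl false ∧ y = Sum.inl true) ∨ (∃ s, x = Sum.inl (anchor s) ∧ y = Sum.inr s))

variable {anchor}

lemma star_adj_center {b b' : Bool} (h : b ≠ b') :
    (starTree anchor).Adj (Sum.inl b) (Sum.inl b') := by
  rw [starTree, SimpleGraph.fromRel_adj]
  refine ⟨by simp [h], ?_⟩
  cases b
  · cases b'
    · simp at h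
    · exact Or.inl (Or.inl ⟨rfl, rfl⟩)
  · cases b'
    · exact Or.inr (Or.inl ⟨rfl, rfl⟩)
    · simp at h

lemma star_adj_leaf (s : σ) : (starTree anchor).Adj (Sum.inl (anchor s)) (Sum.inr s) := by
  rw [starTree, SimpleGraph.fromRel_adj]
  exact ⟨by simp, Or.inl (Or.inr ⟨s, rfl, rfl⟩)⟩

lemma star_leaf_nbr {z : Bool ⊕ σ} {s : σ} (h : (starTree anchor).Adj z (Sum.inr s)) :
    z = Sum.inl (anchor s) := by
  rw [starTree, SimpleGraph.fromRel_adj] at h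
  rcases h.2 with (⟨_, hb⟩ | ⟨s', ha, hs⟩) | (⟨ha, _⟩ | ⟨s', ha, _⟩)
  · exact absurd hb.symm Sum.inl_ne_inr
  · obtain rfl := Sum.inr_injective hs
    exact ha
  · exact absurd ha Sum.inr_ne_inl
  · exact absurd ha Sum.inr_ne_inl

lemma star_connected : (starTree anchor).Connected := by
  have hr : ∀ x : Bool ⊕ σ, (starTree anchor).Reachable x (Sum.inl true) := by
    intro x
    rcases x with b | s
    · cases b
      · exact (star_adj_center (by simp)).reachable
      · rfl
    · refine ((star_adj_leaf s).symm.reachable).trans ?_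
      cases hs : anchor s
      · exact (star_adj_center (by simp)).reachable
      · rfl
  rw [SimpleGraph.connected_iff]
  exact ⟨fun x y => (hr x).trans (hr y).symm, ⟨Sum.inl true⟩⟩

lemma star_acyclic : (starTree anchor).IsAcyclic := by
  classical
  intro v c hc
  rcases Classical.em (∃ s : σ, Sum.inr s ∈ c.support) with hleaf | hleaf
  · obtain ⟨s, hs⟩ := hleaf
    have hc' := hc.rotate hs
    set c' := c.rotate _ hs with hc'def
    clear_value c'
    clear hc hs hc'def c
    cases c' with
    | nil => exact hc'.ne_nil rfl
    | cons hadj p =>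
      rename_i w1
      have hw1 : w1 = Sum.inl (anchor s) := star_leaf_nbr hadj.symm
      rw [SimpleGraph.Walk.cons_isCycle_iff] at hc'
      -- the last edge of p duplicates the first edge
      have hne : (Sum.inr s : Bool ⊕ σ) ≠ w1 := by rw [hw1]; exact Sum.inr_ne_inl
      obtain ⟨w2, hadj2, q, hq⟩ := SimpleGraph.Walk.exists_eq_cons_of_ne hne p.reverse
      have hw2 : w2 = Sum.inl (anchor s) := star_leaf_nbr hadj2.symm
      apply hc'.2
      have : s(Sum.inr s, w2) ∈ p.reverse.edges := by
        rw [hq]; simp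
      rw [SimpleGraph.Walk.edges_reverse, List.mem_reverse] at this
      rw [hw2, ← hw1] at this
      simpa [Sym2.eq_swap] using this
  · -- no leaf in the support: all vertices are among the two centers
    have hmem : ∀ x ∈ c.support, x = Sum.inl true ∨ x = Sum.inl false := by
      intro x hx
      rcases x with b | s
      · cases b
        · exact Or.inr rfl
        · exact Or.inl rfl
      · exact absurd ⟨s, hx⟩ hleaf
    have hlen : 3 ≤ c.length := hc.three_le_length
    have hnd : c.support.tail.Nodup := hc.2
    have hsub : ∀ x ∈ c.support.tail, x = Sum.inl true ∨ x = Sum.inl false := by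
      intro x hx
      exact hmem x (List.mem_of_mem_tail hx)
    have hlen' : c.support.tail.length = c.length := by
      have := c.length_support
      have : c.support ≠ [] := c.support_ne_nil
      simp [List.length_tail, c.length_support]
    rcases htl : c.support.tail with _ | ⟨a, _ | ⟨b, _ | ⟨d, rest⟩⟩⟩ <;>
      rw [htl] at hlen' <;> simp at hlen' <;> try omega
    rw [htl] at hnd hsub
    have ha := hsub a (by simp)
    have hb := hsub b (by simp)
    have hd := hsub d (by simp)
    simp only [List.nodup_cons, List.mem_cons] at hnd
    rcases ha with rfl | rfl <;> rcases hb with rfl | rfl <;> rcases hd with rfl | rfl <;>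
      simp at hnd

end Star

section Walks
variable {σ : Type*} {anchor : σ → Bool}

lemma star_walk_cc {b b' : Bool} (h : b ≠ b') :
    ∃ p : (starTree anchor).Walk (Sum.inl b) (Sum.inl b'),
      p.support = [Sum.inl b, Sum.inl b'] := by
  exact ⟨SimpleGraph.Walk.cons (star_adj_center h) SimpleGraph.Walk.nil, by simp⟩

lemma star_walk_lc_eq {s : σ} {b : Bool} (h : anchor s = b) :
    ∃ p : (starTree anchor).Walk (Sum.inr s) (Sum.inl b),
      p.support = [Sum.inr s, Sum.inl b] := by
  subst h
  exact ⟨SimpleGraph.Walk.cons (star_adj_leaf s).symm SimpleGraph.Walk.nil, by simp⟩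

lemma star_walk_lc_ne {s : σ} {b : Bool} (h : anchor s ≠ b) :
    ∃ p : (starTree anchor).Walk (Sum.inr s) (Sum.inl b),
      p.support = [Sum.inr s, Sum.inl (anchor s), Sum.inl b] := by
  exact ⟨SimpleGraph.Walk.cons (star_adj_leaf s).symm
    (SimpleGraph.Walk.cons (star_adj_center h) SimpleGraph.Walk.nil), by simp⟩

lemma star_walk_ll_eq {s t : σ} (h : anchor s = anchor t) :
    ∃ p : (starTree anchor).Walk (Sum.inr s) (Sum.inr t),
      p.support = [Sum.inr s, Sum.inl (anchor s), Sum.inr t] := by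
  have hadj2 : (starTree anchor).Adj (Sum.inl (anchor s)) (Sum.inr t) := by
    rw [h]; exact star_adj_leaf t
  exact ⟨SimpleGraph.Walk.cons (star_adj_leaf s).symm (SimpleGraph.Walk.cons hadj2
    SimpleGraph.Walk.nil), by simp⟩

lemma star_walk_ll_ne {s t : σ} (h : anchor s ≠ anchor t) :
    ∃ p : (starTree anchor).Walk (Sum.inr s) (Sum.inr t),
      p.support = [Sum.inr s, Sum.inl (anchor s), Sum.inl (anchor t), Sum.inr t] := by
  exact ⟨SimpleGraph.Walk.cons (star_adj_leaf s).symm (SimpleGraph.Walk.cons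
    (star_adj_center h) (SimpleGraph.Walk.cons (star_adj_leaf t) SimpleGraph.Walk.nil)), by simp⟩

end Walks

lemma exists_half_split {α : Type*} (S : Set α) (hfin : S.Finite) :
    ∃ T1 T2 : Set α, T1 ∪ T2 = S ∧ 2 * T1.ncard ≤ S.ncard + 1 ∧ 2 * T2.ncard ≤ S.ncard + 1 := by
  classical
  obtain ⟨t, hts, htc⟩ := Finset.exists_subset_card_eq
    (s := hfin.toFinset) (n := hfin.toFinset.card / 2) (Nat.div_le_self _ _)
  have hS : S.ncard = hfin.toFinset.card := by
    conv_lhs => rw [← hfin.coe_toFinset]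
    rw [ncard_coe_finset]
  have hsd : (hfin.toFinset \ t).card = hfin.toFinset.card - hfin.toFinset.card / 2 := by
    rw [Finset.card_sdiff_of_subset hts, htc]
  refine ⟨(t : Set α), ((hfin.toFinset \ t : Finset α) : Set α), ?_, ?_, ?_⟩
  · rw [← Finset.coe_union, Finset.union_sdiff_of_subset hts, Set.Finite.coe_toFinset]
  · rw [ncard_coe_finset, htc, hS]; omega
  · rw [ncard_coe_finset, hsd, hS]; omega

section Main

variable {V : Type} [Fintype V] {G : SimpleGraph V} {E' : Set G.edgeSet}
  {Adj : (V ⊕ ↥E') → (V ⊕ ↥E') → Prop}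

set_option maxHeartbeats 1000000 in
theorem dtwLE_main (hor : IsAcyclicOrientation (subdivGraph G E') Adj) :
    dtwLE Adj ((Fintype.card V + 1) / 2) := by
  classical
  set n := Fintype.card V with hn
  set Src : Set (V ⊕ ↥E') := {v | IsSource Adj Set.univ v} with hSrc
  set ESrc : Set ↥E' := {e | IsSource Adj Set.univ (Sum.inr e)} with hESrc
  set VSrc : Set V := {v | IsSource Adj Set.univ (Sum.inl v)} with hVSrc
  -- endpoint functions
  have hends : ∀ e : ↥E', ∃ a b : V, a ≠ b ∧ EndS G E' e = {a, b} := endS_pair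
  choose fa fb hfab hEnd using hends
  have hfa_mem : ∀ e, fa e ∈ EndS G E' e := fun e => by rw [hEnd e]; exact mem_insert _ _
  have hfb_mem : ∀ e, fb e ∈ EndS G E' e := fun e => by
    rw [hEnd e]; exact mem_insert_of_mem _ rfl
  -- maximal matching among edge-sources
  set 𝒜 : Set (Set ↥E') :=
    {A | A ⊆ ESrc ∧ A.Pairwise (fun e f => Disjoint (EndS G E' e) (EndS G E' f))} with h𝒜
  have h𝒜ne : 𝒜.Nonempty := ⟨∅, empty_subset _, Set.pairwise_empty _⟩
  obtain ⟨M, hM𝒜, hMmax⟩ := Set.Finite.exists_maximalFor id 𝒜 (Set.toFinite _) h𝒜ne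
  have hMsub : M ⊆ ESrc := hM𝒜.1
  have hMadd : ∀ e ∈ ESrc, e ∉ M → ∃ f ∈ M, ¬ Disjoint (EndS G E' e) (EndS G E' f) := by
    intro e he hem
    by_contra hcon
    push_neg at hcon
    have hins : insert e M ∈ 𝒜 := by
      refine ⟨insert_subset he hMsub, ?_⟩
      exact Set.pairwise_insert.2 ⟨hM𝒜.2, fun f hf _ => ⟨hcon f hf, (hcon f hf).symm⟩⟩
    have := hMmax hins (subset_insert _ _)
    simp only [id] at this
    exact hem (this (mem_insert e M))
  -- exposed endpoints
  set X : Set V := (⋃ e ∈ ESrc, EndS G E' e) \ (⋃ f ∈ M, EndS G E' f) with hX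
  have hXch : ∀ v : ↥X, ∃ e : ↥E', e ∈ ESrc ∧ (v : V) ∈ EndS G E' e := by
    intro v
    have hv := v.2.1
    simp only [mem_iUnion] at hv
    obtain ⟨e, he, hve⟩ := hv
    exact ⟨e, he, hve⟩
  choose tf htf1 htf2 using hXch
  set TX : Set (V ⊕ ↥E') := Set.range (fun v : ↥X => Sum.inr (tf v)) with hTX
  set TQ : Set (V ⊕ ↥E') := TX ∪ Sum.inl '' VSrc with hTQ
  obtain ⟨T1, T2, hT12, hT1c, hT2c⟩ := exists_half_split TQ (Set.toFinite _)
  set H : Bool → Set (V ⊕ ↥E') := fun b => Sum.inr '' M ∪ (if b then T1 else T2) with hH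
  have hT1sub : T1 ⊆ TQ := by rw [← hT12]; exact subset_union_left
  have hT2sub : T2 ⊆ TQ := by rw [← hT12]; exact subset_union_right
  have hTQsrc : ∀ x ∈ TQ, x ∈ Src := by
    rintro x (⟨v, rfl⟩ | ⟨v, hv, rfl⟩)
    · exact htf1 v
    · exact hv
  have hHsrc : ∀ b, H b ⊆ Src := by
    intro b x hx
    rcases hx with ⟨e, he, rfl⟩ | hx
    · exact hMsub he
    · rcases b with _ | _
      · simp only [if_neg Bool.false_ne_true] at hx
        exact hTQsrc x (hT2sub hx)
      · simp only [if_pos rfl] at hx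
        exact hTQsrc x (hT1sub hx)
  have hTQH : TQ ⊆ H true ∪ H false := by
    intro x hx
    rw [← hT12] at hx
    rcases hx with hx | hx
    · exact Or.inl (mem_union_right _ (by simp only [if_pos rfl]; exact hx))
    · exact Or.inr (mem_union_right _ (by simp only [if_neg Bool.false_ne_true]; exact hx))
  -- cardinality bound
  have hinj : Function.Injective (Sum.inr : ↥E' → V ⊕ ↥E') := Sum.inr_injective
  have hkey : 2 * M.ncard + TQ.ncard ≤ n := by
    have hTXc : TX.ncard ≤ X.ncard := by
      rw [hTX, ← Set.image_univ]
      refine le_trans (Set.ncard_image_le (Set.toFinite _)) ?_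
      rw [Set.ncard_univ, Nat.card_coe_set_eq]
    have hTQc : TQ.ncard ≤ X.ncard + VSrc.ncard := by
      refine le_trans (Set.ncard_union_le _ _) ?_
      have : (Sum.inl '' VSrc).ncard = VSrc.ncard :=
        Set.ncard_image_of_injective _
          (Sum.inl_injective : Function.Injective (Sum.inl : V → V ⊕ ↥E'))
      omega
    -- injectivity of endpoints on M
    have hfaInj : Set.InjOn fa M := by
      intro e he f hf hef
      by_contra hne
      have := hM𝒜.2 he hf hne
      exact (Set.disjoint_left.1 this (hfa_mem e)) (hef ▸ hfa_mem f)
    have hfbInj : Set.InjOn fb M := by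
      intro e he f hf hef
      by_contra hne
      have := hM𝒜.2 he hf hne
      exact (Set.disjoint_left.1 this (hfb_mem e)) (hef ▸ hfb_mem f)
    have hd12 : Disjoint (fa '' M) (fb '' M) := by
      rw [Set.disjoint_left]
      rintro x ⟨e, he, rfl⟩ ⟨f, hf, hef⟩
      by_cases hefeq : e = f
      · subst hefeq
        exact hfab e hef.symm
      · have := hM𝒜.2 hf he (fun hh => hefeq hh.symm)
        exact (Set.disjoint_left.1 this (hfb_mem f)) (hef ▸ hfa_mem e)
    have hsubM : fa '' M ∪ fb '' M ⊆ ⋃ f ∈ M, EndS G E' f := by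
      rintro x (⟨e, he, rfl⟩ | ⟨e, he, rfl⟩) <;>
        exact Set.mem_biUnion he (by first | exact hfa_mem e | exact hfb_mem e)
    have hdX : Disjoint (fa '' M ∪ fb '' M) X := by
      rw [Set.disjoint_left]
      intro x hx hxX
      exact hxX.2 (hsubM hx)
    have hsubE : fa '' M ∪ fb '' M ∪ X ⊆ ⋃ e ∈ ESrc, EndS G E' e := by
      rintro x (hx | hx)
      · rcases hx with ⟨e, he, rfl⟩ | ⟨e, he, rfl⟩ <;>
          exact Set.mem_biUnion (hMsub he) (by first | exact hfa_mem e | exact hfb_mem e)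
      · exact hx.1
    have hdV : Disjoint (fa '' M ∪ fb '' M ∪ X) VSrc := by
      rw [Set.disjoint_left]
      intro x hx hxV
      have := hsubE hx
      simp only [mem_iUnion] at this
      obtain ⟨e, he, hxe⟩ := this
      exact endpoint_not_vsource hor he hxe hxV
    have hcard1 : (fa '' M ∪ fb '' M).ncard = 2 * M.ncard := by
      rw [Set.ncard_union_eq hd12, Set.ncard_image_of_injOn hfaInj,
        Set.ncard_image_of_injOn hfbInj]
      omega
    have hcard2 : (fa '' M ∪ fb '' M ∪ X).ncard = 2 * M.ncard + X.ncard := by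
      rw [Set.ncard_union_eq hdX, hcard1]
    have hcard3 : (fa '' M ∪ fb '' M ∪ X ∪ VSrc).ncard = 2 * M.ncard + X.ncard + VSrc.ncard := by
      rw [Set.ncard_union_eq hdV, hcard2]
    have hle : (fa '' M ∪ fb '' M ∪ X ∪ VSrc).ncard ≤ n := by
      rw [hn, ← Nat.card_eq_fintype_card, ← Set.ncard_univ]
      exact Set.ncard_le_ncard (subset_univ _) (Set.toFinite _)
    omega
  have hHcard : ∀ b, (H b).ncard ≤ (n + 1) / 2 := by
    intro b
    have h1 : (H b).ncard ≤ M.ncard + (if b then T1 else T2).ncard := by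
      refine le_trans (Set.ncard_union_le _ _) ?_
      rw [Set.ncard_image_of_injective _ hinj]
    have h2 : 2 * (if b then T1 else T2).ncard ≤ TQ.ncard + 1 := by
      rcases b with _ | _
      · simpa using hT2c
      · simpa using hT1c
    omega
  -- anchors
  set RH : Bool → Set (V ⊕ ↥E') := fun b => ReachSet Adj Set.univ (H b) with hRH
  have hRHmem : ∀ b, ∀ t' ∈ H b, ∀ x ∈ Reach Adj Set.univ t', x ∈ RH b := by
    intro b t' ht' x hx
    exact Set.mem_biUnion ht' hx
  have hanch : ∀ s : V ⊕ ↥E', ∃ b : Bool, s ∈ Src →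
      ((s ∈ H true ∪ H false → s ∈ H b) ∧
        (∀ x ∈ Reach Adj Set.univ s,
          (∃ t ∈ Src, t ≠ s ∧ x ∈ Reach Adj Set.univ t) → x ∈ RH b)) := by
    intro s
    by_cases hsrc : s ∈ Src
    swap
    · exact ⟨true, fun hs => absurd hs hsrc⟩
    by_cases hsH : s ∈ H true ∪ H false
    · rcases hsH with hsT | hsF
      · exact ⟨true, fun _ => ⟨fun _ => hsT, fun x hx _ => hRHmem true s hsT x hx⟩⟩
      · exact ⟨false, fun _ => ⟨fun _ => hsF, fun x hx _ => hRHmem false s hsF x hx⟩⟩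
    · rcases s with v | e
      · -- a vertex source would be in TQ ⊆ H, contradiction
        exact absurd (hTQH (mem_union_right _ (mem_image_of_mem _ hsrc))) hsH
      · -- edge source not in H
        have he : e ∈ ESrc := hsrc
        have heM : e ∉ M := fun hm =>
          hsH (Or.inl (mem_union_left _ (mem_image_of_mem _ hm)))
        obtain ⟨f, hfM, hnd⟩ := hMadd e he heM
        obtain ⟨y0, hy0e, hy0f⟩ := Set.not_disjoint_iff.1 hnd
        -- y0 is hit in both blocks via the matched edge f
        have hity0 : ∀ b, ∃ t' ∈ H b, Sum.inl y0 ∈ Reach Adj Set.univ t' := by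
          intro b
          exact ⟨Sum.inr f, mem_union_left _ (mem_image_of_mem _ hfM),
            edgeSource_reaches hor (hMsub hfM) hy0f⟩
        -- the other endpoint
        have hother : ∃ y1, EndS G E' e ⊆ {y0, y1} := by
          have hy0' : y0 ∈ ({fa e, fb e} : Set V) := by rw [← hEnd e]; exact hy0e
          rcases hy0' with rfl | rfl
          · exact ⟨fb e, by rw [hEnd e]⟩
          · refine ⟨fa e, ?_⟩
            rw [hEnd e, Set.pair_comm]
        obtain ⟨y1, hy1sub⟩ := hother
        -- find a block hitting y1 as well
        have hity1 : y1 ∈ EndS G E' e → ∃ b, ∃ t' ∈ H b, Sum.inl y1 ∈ Reach Adj Set.univ t' := by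
          intro hy1e
          by_cases hy1M : ∃ f' ∈ M, y1 ∈ EndS G E' f'
          · obtain ⟨f', hf'M, hy1f'⟩ := hy1M
            exact ⟨true, Sum.inr f', mem_union_left _ (mem_image_of_mem _ hf'M),
              edgeSource_reaches hor (hMsub hf'M) hy1f'⟩
          · have hy1X : y1 ∈ X := by
              constructor
              · exact Set.mem_biUnion he hy1e
              · simp only [mem_iUnion, not_exists]
                intro f' hf'
                exact fun hmem => hy1M ⟨f', hf', hmem⟩
            set z : V ⊕ ↥E' := Sum.inr (tf ⟨y1, hy1X⟩) with hz
            have hzTQ : z ∈ TQ := mem_union_left _ ⟨⟨y1, hy1X⟩, rfl⟩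
            have hzT : z ∈ T1 ∪ T2 := by rw [hT12]; exact hzTQ
            have hreach : Sum.inl y1 ∈ Reach Adj Set.univ z :=
              edgeSource_reaches hor (htf1 ⟨y1, hy1X⟩) (htf2 ⟨y1, hy1X⟩)
            rcases hzT with hz1 | hz2
            · exact ⟨true, z, mem_union_right _ (by simp only [if_pos rfl]; exact hz1), hreach⟩
            · exact ⟨false, z,
                mem_union_right _ (by simp only [if_neg Bool.false_ne_true]; exact hz2), hreach⟩
        obtain ⟨b, hitb⟩ : ∃ b, ∀ y ∈ EndS G E' e,
            ∃ t' ∈ H b, Sum.inl y ∈ Reach Adj Set.univ t' := by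
          by_cases hy1e : y1 ∈ EndS G E' e
          · obtain ⟨b, hb⟩ := hity1 hy1e
            refine ⟨b, fun y hy => ?_⟩
            rcases hy1sub hy with rfl | rfl
            · exact hity0 b
            · exact hb
          · refine ⟨true, fun y hy => ?_⟩
            rcases hy1sub hy with rfl | rfl
            · exact hity0 true
            · exact absurd hy hy1e
        refine ⟨b, fun _ => ⟨fun hI => absurd hI hsH, ?_⟩⟩
        intro x hx hwit
        obtain ⟨t, htsrc, htne, hxt⟩ := hwit
        rcases reach_structure hor hx with rfl | ⟨u, hu, hxu⟩
        · exact absurd (source_reach_eq he hxt) htne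
        · obtain ⟨y, hyE, huy⟩ := reach_from_edgeSource hor hu
          obtain ⟨t', ht'H, hyt'⟩ := hitb y hyE
          have hut' : Sum.inl u ∈ Reach Adj Set.univ t' := reach_trans hyt' huy
          have hxt' : x ∈ Reach Adj Set.univ t' := by
            rcases hxu with rfl | harc
            · exact hut'
            · exact reach_tail hut' harc
          exact hRHmem b t' ht'H x hxt'
  choose anc hanc using hanch
  -- key reachability lemmas
  have hancH : ∀ s ∈ Src, s ∈ H true ∪ H false → s ∈ H (anc s) :=
    fun s hs hI => ((hanc s) hs).1 hI
  have hGood : ∀ s ∈ Src, ∀ x ∈ Reach Adj Set.univ s,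
      (∃ t ∈ Src, t ≠ s ∧ x ∈ Reach Adj Set.univ t) → x ∈ RH (anc s) :=
    fun s hs => ((hanc s) hs).2
  have key2 : ∀ s ∈ Src, ∀ t ∈ Src, t ≠ s →
      Reach Adj Set.univ s ∩ Reach Adj Set.univ t ⊆ RH (anc s) := by
    intro s hs t ht hne x hx
    by_cases hsH : s ∈ H true ∪ H false
    · exact hRHmem _ s (hancH s hs hsH) x hx.1
    · exact hGood s hs x hx.1 ⟨t, ht, hne, hx.2⟩
  have key3 : ∀ s ∈ Src, ∀ b, Reach Adj Set.univ s ∩ RH b ⊆ RH (anc s) := by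
    intro s hs b x hx
    obtain ⟨t0, ht0H, hxt0⟩ : ∃ t0 ∈ H b, x ∈ Reach Adj Set.univ t0 := by
      simpa [hRH, ReachSet] using hx.2
    by_cases ht0s : t0 = s
    · subst ht0s
      have ht0I : t0 ∈ H true ∪ H false := by
        rcases b with _ | _
        · exact Or.inr ht0H
        · exact Or.inl ht0H
      exact hRHmem _ t0 (hancH t0 hs ht0I) x hx.1
    · exact key2 s hs t0 (hHsrc b ht0H) ht0s ⟨hx.1, hxt0⟩
  -- build the decomposition
  set anchor : ↥Src → Bool := fun s => anc ↑s with hanchor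
  have hRS : ∀ y : V ⊕ ↥E', ReachSet Adj Set.univ {y} = Reach Adj Set.univ y := fun y =>
    Set.biUnion_singleton _ _
  refine ⟨Bool ⊕ ↥Src,
    { tree := starTree anchor
      conn := star_connected
      acyc := star_acyclic
      bags := Sum.elim H (fun s => {↑s})
      bags_sources := ?_
      cover := ?_
      reach := ?_ }, ?_⟩
  · rintro (b | s) v hv
    · exact hHsrc b hv
    · rcases hv with rfl
      exact s.2
  · intro v hv
    exact ⟨Sum.inr ⟨v, hv⟩, rfl⟩
  · rintro i k j hOn
    by_cases hij : i = j
    · subst hij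
      have hk := hOn SimpleGraph.Walk.nil
      simp only [SimpleGraph.Walk.support_nil, List.mem_singleton] at hk
      subst hk
      exact fun x hx => hx.1
    rcases i with b | s <;> rcases j with b' | t
    · -- center to center
      have hbb' : b ≠ b' := fun hh => hij (by rw [hh])
      obtain ⟨p, hp⟩ := star_walk_cc (anchor := anchor) hbb'
      have hk := hOn p
      rw [hp] at hk
      simp only [List.mem_cons, List.mem_singleton, List.not_mem_nil, or_false] at hk
      rcases hk with rfl | rfl
      · exact fun x hx => hx.1
      · exact fun x hx => hx.2
    · -- center to leaf
      by_cases hat : anchor t = b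
      · obtain ⟨q, hq⟩ := star_walk_lc_eq hat
        have hk := hOn q.reverse
        rw [SimpleGraph.Walk.support_reverse, hq] at hk
        simp only [List.mem_reverse, List.mem_cons, List.mem_singleton, List.not_mem_nil,
          or_false] at hk
        rcases hk with rfl | rfl
        · exact fun x hx => hx.2
        · exact fun x hx => hx.1
      · obtain ⟨q, hq⟩ := star_walk_lc_ne hat
        have hk := hOn q.reverse
        rw [SimpleGraph.Walk.support_reverse, hq] at hk
        simp only [List.mem_reverse, List.mem_cons, List.mem_singleton, List.not_mem_nil,
          or_false] at hk
        rcases hk with rfl | rfl | rfl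
        · exact fun x hx => hx.2
        · intro x hx
          simp only [Sum.elim_inl, Sum.elim_inr] at hx ⊢
          rw [hRS] at hx
          exact key3 ↑t t.2 b ⟨hx.2, hx.1⟩
        · exact fun x hx => hx.1
    · -- leaf to center
      by_cases hat : anchor s = b'
      · obtain ⟨q, hq⟩ := star_walk_lc_eq hat
        have hk := hOn q
        rw [hq] at hk
        simp only [List.mem_cons, List.mem_singleton, List.not_mem_nil, or_false] at hk
        rcases hk with rfl | rfl
        · exact fun x hx => hx.1
        · exact fun x hx => hx.2
      · obtain ⟨q, hq⟩ := star_walk_lc_ne hat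
        have hk := hOn q
        rw [hq] at hk
        simp only [List.mem_cons, List.mem_singleton, List.not_mem_nil, or_false] at hk
        rcases hk with rfl | rfl | rfl
        · exact fun x hx => hx.1
        · intro x hx
          simp only [Sum.elim_inl, Sum.elim_inr] at hx ⊢
          rw [hRS] at hx
          exact key3 ↑s s.2 b' ⟨hx.1, hx.2⟩
        · exact fun x hx => hx.2
    · -- leaf to leaf
      have hst : (↑s : V ⊕ ↥E') ≠ ↑t := by
        intro hh
        exact hij (by rw [Subtype.ext hh])
      by_cases hat : anchor s = anchor t
      · obtain ⟨q, hq⟩ := star_walk_ll_eq hat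
        have hk := hOn q
        rw [hq] at hk
        simp only [List.mem_cons, List.mem_singleton, List.not_mem_nil, or_false] at hk
        rcases hk with rfl | rfl | rfl
        · exact fun x hx => hx.1
        · intro x hx
          simp only [Sum.elim_inl, Sum.elim_inr] at hx ⊢
          rw [hRS, hRS] at hx
          exact key2 ↑s s.2 ↑t t.2 (fun hh => hst hh.symm) hx
        · exact fun x hx => hx.2
      · obtain ⟨q, hq⟩ := star_walk_ll_ne hat
        have hk := hOn q
        rw [hq] at hk
        simp only [List.mem_cons, List.mem_singleton, List.not_mem_nil, or_false] at hk
        rcases hk with rfl | rfl | rfl | rfl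
        · exact fun x hx => hx.1
        · intro x hx
          simp only [Sum.elim_inl, Sum.elim_inr] at hx ⊢
          rw [hRS, hRS] at hx
          exact key2 ↑s s.2 ↑t t.2 (fun hh => hst hh.symm) hx
        · intro x hx
          simp only [Sum.elim_inl, Sum.elim_inr] at hx ⊢
          rw [hRS, hRS] at hx
          exact key2 ↑t t.2 ↑s s.2 hst ⟨hx.2, hx.1⟩
        · exact fun x hx => hx.2
  · rintro (b | s)
    · exact hHcard b
    · simp only [Sum.elim_inr, Set.ncard_singleton]
      have hV : 0 < n := by
        rcases hsv : (↑s : V ⊕ ↥E') with v | e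
        · rw [hn]
          exact Fintype.card_pos_iff.mpr ⟨v⟩
        · rw [hn]
          exact Fintype.card_pos_iff.mpr ⟨fa e⟩
      omega

end Main

/-- if `G_sub` is obtained from an `n`-vertex graph `G` by subdividing
each edge at most once, then every acyclic orientation of `G_sub` has DAG
treewidth at most ⌈n/2⌉. -/
theorem dtw_subdivision_le {V : Type} [Fintype V] (G : SimpleGraph V)
    (E' : Set G.edgeSet) (Adj : (V ⊕ ↥E') → (V ⊕ ↥E') → Prop)
    (h : IsAcyclicOrientation (subdivGraph G E') Adj) :
    dtw Adj ≤ (Fintype.card V + 1) / 2 :=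
  Nat.sInf_le (dtwLE_main h)

end DagPaper
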